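/- arXiv:1203.2242 — 5 statements merged into one kernel-verified Lean document; each statement's English description precedes it below -/
import Mathlib

section
/- Let s₁, s₂ be complex numbers with Re s₂ > 1 and Re(s₁+s₂) > 2. Then the double series ∑_{m≥1} ∑_{n≥1} 1/(m^{s₁} (m+n)^{s₂}) converges absolutely. -/
theorem stmt3 (s₁ s₂ : ℂ) (h2 : 1 < s₂.re) (h12 : 2 < (s₁ + s₂).re) :
    Summable (fun p : ℕ × ℕ =>
      ‖((p.1 + 1 : ℕ) : ℂ) ^ (-s₁) * ((p.1 + p.2 + 2 : ℕ) : ℂ) ^ (-s₂)‖) := by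
  set σ₁ := s₁.re with hσ₁
  set σ₂ := s₂.re with hσ₂
  have hσ : 2 < σ₁ + σ₂ := by simpa [Complex.add_re] using h12
  set b : ℝ := (1 + min σ₂ (σ₁ + σ₂ - 1)) / 2 with hbdef
  have hmin : 1 < min σ₂ (σ₁ + σ₂ - 1) := lt_min h2 (by linarith)
  have hb1 : 1 < b := by rw [hbdef]; linarith
  have hb2 : b < σ₂ := by
    have := min_le_left σ₂ (σ₁ + σ₂ - 1); rw [hbdef]; linarith
  have hb3 : b < σ₁ + σ₂ - 1 := by
    have := min_le_right σ₂ (σ₁ + σ₂ - 1); rw [hbdef]; linarith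
  have hfs : Summable (fun m : ℕ => ((m : ℝ) + 1) ^ (-(σ₁ + (σ₂ - b)))) := by
    have h := (summable_nat_add_iff 1).2 (Real.summable_nat_rpow.2
      (show -(σ₁ + (σ₂ - b)) < -1 by linarith))
    refine h.congr fun m => ?_
    push_cast
    ring_nf
  have hgs : Summable (fun n : ℕ => ((n : ℝ) + 1) ^ (-b)) := by
    have h := (summable_nat_add_iff 1).2 (Real.summable_nat_rpow.2
      (show -b < -1 by linarith))
    refine h.congr fun n => ?_
    push_cast
    ring_nf
  have hprod := hfs.mul_of_nonneg hgs
    (fun m => Real.rpow_nonneg (by positivity) _)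
    (fun n => Real.rpow_nonneg (by positivity) _)
  refine Summable.of_nonneg_of_le (fun p => norm_nonneg _) (fun p => ?_) hprod
  obtain ⟨m, n⟩ := p
  have hm1 : (0:ℝ) < (m : ℝ) + 1 := by positivity
  have hn1 : (0:ℝ) < (n : ℝ) + 1 := by positivity
  have hk : (0:ℝ) < (m : ℝ) + n + 2 := by positivity
  rw [norm_mul, Complex.norm_natCast_cpow_of_pos (by omega),
    Complex.norm_natCast_cpow_of_pos (by omega)]
  push_cast
  have e1 : ((m : ℝ) + ↑n + 2) ^ (-s₂).re
      = ((m : ℝ) + n + 2) ^ (-(σ₂ - b)) * ((m : ℝ) + n + 2) ^ (-b) := by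
    rw [← Real.rpow_add hk]
    norm_num [hσ₂]
    ring_nf
  rw [e1]
  have e2 : ((m : ℝ) + 1) ^ (-(σ₁ + (σ₂ - b)))
      = ((m : ℝ) + 1) ^ (-s₁).re * ((m : ℝ) + 1) ^ (-(σ₂ - b)) := by
    rw [← Real.rpow_add hm1]
    norm_num [hσ₁]
    ring_nf
  rw [e2, mul_assoc]
  refine mul_le_mul_of_nonneg_left ?_ (Real.rpow_nonneg hm1.le _)
  refine mul_le_mul ?_ ?_ (Real.rpow_nonneg hk.le _) (Real.rpow_nonneg hm1.le _)
  · exact Real.rpow_le_rpow_of_nonpos hm1 (by linarith) (by linarith)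
  · exact Real.rpow_le_rpow_of_nonpos hn1 (by linarith) (by linarith)
end

section
/- Let σ₀ > 1 and σ > 1 be real numbers. Then ∑_{m₁,m₂,n₁≥1} (m₁m₂)^{-σ₀} ∑_{r=1}^{m₁+n₁} (m₁+n₁)^{-σ} (m₁+n₁+r)^{-σ} / log(1 + r/(m₁+n₁)) is finite. -/
/-!
Since `log (1 + r/N) ≥ r/(N + r)`, each summand of the inner sum is at most
`N^{-σ} (N + r)^{1-σ} / r ≤ N^{-σ} r^{-σ}`, so the inner sum is at most `ζ(σ) N^{-σ}`.
With `N = m₁ + n₁ ≥ n₁` the whole triple series is dominated by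
`ζ(σ) m₁^{-σ₀} m₂^{-σ₀} n₁^{-σ}`, a product of convergent series.
-/

open Real Finset

lemma rpow_neg_div_log_one_add_div_le {N r σ : ℝ} (hN : 0 < N) (hr : 0 < r) (hσ : 1 ≤ σ) :
    (N + r) ^ (-σ) / log (1 + r / N) ≤ r ^ (-σ) := by
  have hNr : 0 < N + r := by positivity
  have hlog : r / (N + r) ≤ log (1 + r / N) := by
    have h := one_sub_inv_le_log_of_pos (x := 1 + r / N) (by positivity)
    have heq : 1 - (1 + r / N)⁻¹ = r / (N + r) := by field_simp; ring
    rwa [heq] at h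
  calc (N + r) ^ (-σ) / log (1 + r / N)
      ≤ (N + r) ^ (-σ) / (r / (N + r)) :=
        div_le_div_of_nonneg_left (by positivity) (by positivity) hlog
    _ = (N + r) ^ (1 - σ) / r := by
        rw [sub_eq_neg_add, rpow_add hNr, rpow_one]; field_simp
    _ ≤ r ^ (1 - σ) / r := by
        gcongr ?_ / r
        exact rpow_le_rpow_of_nonpos hr (by linarith) (by linarith)
    _ = r ^ (-σ) := by
        rw [sub_eq_neg_add, rpow_add hr, rpow_one]; field_simp

/-- The inner sum over `r`, for `N = m₁ + n₁`. -/
noncomputable def logWeightedSum (σ : ℝ) (N : ℕ) : ℝ :=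
  ∑ r ∈ Icc 1 N, (N : ℝ) ^ (-σ) * ((N + r : ℕ) : ℝ) ^ (-σ) / log (1 + r / N)

lemma logWeightedSum_nonneg (σ : ℝ) (N : ℕ) : 0 ≤ logWeightedSum σ N :=
  sum_nonneg fun r _ =>
    div_nonneg (by positivity) (log_nonneg (le_add_of_nonneg_right (by positivity)))

lemma logWeightedSum_le {σ : ℝ} (hσ : 1 < σ) (N : ℕ) :
    logWeightedSum σ N ≤ (N : ℝ) ^ (-σ) * ∑' n : ℕ, (n : ℝ) ^ (-σ) := by
  have hsum : Summable fun n : ℕ => (n : ℝ) ^ (-σ) := summable_nat_rpow.2 (by linarith)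
  have hterm : ∀ r ∈ Icc 1 N, (N : ℝ) ^ (-σ) * ((N + r : ℕ) : ℝ) ^ (-σ) / log (1 + r / N)
      ≤ (N : ℝ) ^ (-σ) * (r : ℝ) ^ (-σ) := by
    intro r hr
    obtain ⟨hr1, hrN⟩ := mem_Icc.1 hr
    rw [mul_div_assoc, Nat.cast_add]
    gcongr
    exact rpow_neg_div_log_one_add_div_le (by norm_cast; omega) (by norm_cast) hσ.le
  calc logWeightedSum σ N ≤ ∑ r ∈ Icc 1 N, (N : ℝ) ^ (-σ) * (r : ℝ) ^ (-σ) := sum_le_sum hterm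
    _ = (N : ℝ) ^ (-σ) * ∑ r ∈ Icc 1 N, (r : ℝ) ^ (-σ) := by rw [mul_sum]
    _ ≤ (N : ℝ) ^ (-σ) * ∑' n : ℕ, (n : ℝ) ^ (-σ) := by
        gcongr
        exact hsum.sum_le_tsum _ fun n _ => by positivity

lemma summable_nat_succ_rpow_neg {s : ℝ} (hs : 1 < s) :
    Summable fun n : ℕ => ((n + 1 : ℕ) : ℝ) ^ (-s) :=
  (summable_nat_add_iff 1).2 (summable_nat_rpow.2 (by linarith))

theorem stmt7 (σ₀ σ : ℝ) (h0 : 1 < σ₀) (h : 1 < σ) :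
    Summable (fun q : ℕ × ℕ × ℕ =>
      (((q.1 + 1) * (q.2.1 + 1) : ℕ) : ℝ) ^ (-σ₀) *
        ∑ r ∈ Finset.Icc 1 ((q.1 + 1) + (q.2.2 + 1)),
          (((q.1 + 1) + (q.2.2 + 1) : ℕ) : ℝ) ^ (-σ) *
            (((q.1 + 1) + (q.2.2 + 1) + r : ℕ) : ℝ) ^ (-σ) /
            Real.log (1 + (r : ℝ) / (((q.1 + 1) + (q.2.2 + 1) : ℕ) : ℝ))) := by
  set C := ∑' n : ℕ, (n : ℝ) ^ (-σ)
  have hC : 0 ≤ C := tsum_nonneg fun n => by positivity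
  have hdom : Summable fun q : ℕ × ℕ × ℕ => ((q.1 + 1 : ℕ) : ℝ) ^ (-σ₀) *
      (((q.2.1 + 1 : ℕ) : ℝ) ^ (-σ₀) * ((q.2.2 + 1 : ℕ) : ℝ) ^ (-σ)) * C :=
    ((summable_nat_succ_rpow_neg h0).mul_of_nonneg
      ((summable_nat_succ_rpow_neg h0).mul_of_nonneg (summable_nat_succ_rpow_neg h)
        (fun _ => by positivity) fun _ => by positivity)
      (fun _ => by positivity) fun _ => by positivity).mul_right C
  refine hdom.of_nonneg_of_le (fun q => mul_nonneg (by positivity) (logWeightedSum_nonneg σ _))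
    fun ⟨a, b, c⟩ => ?_
  change _ * logWeightedSum σ ((a + 1) + (c + 1)) ≤ _
  have hN : (((a + 1) + (c + 1) : ℕ) : ℝ) ^ (-σ) ≤ ((c + 1 : ℕ) : ℝ) ^ (-σ) :=
    rpow_le_rpow_of_nonpos (by positivity) (by norm_cast; omega) (by linarith)
  calc (((a + 1) * (b + 1) : ℕ) : ℝ) ^ (-σ₀) * logWeightedSum σ ((a + 1) + (c + 1))
      ≤ (((a + 1) * (b + 1) : ℕ) : ℝ) ^ (-σ₀) * (((c + 1 : ℕ) : ℝ) ^ (-σ) * C) := by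
        gcongr
        exact (logWeightedSum_le h _).trans (by gcongr)
    _ = _ := by
        rw [Nat.cast_mul, mul_rpow (by positivity) (by positivity)]; ring
end

section
/- Let s₀ = σ₀ + it₀ with σ₀ > 1 and let σ > 1. Then as T → ∞, ∫_2^T |ζ₂(s₀, σ+it)|² dt = ζ₂^{[2]}(s₀, 2σ) · T + O(1). -/
/-!
Write `ζ₂(s₀, σ + it) = ∑ₙ bₙ e^{-it log (n+2)}` with `bₙ = (∑_{m ≤ n+1} m^{-s₀}) (n+2)^{-σ}`,
an absolutely convergent series. Then `|ζ₂|²` is the absolutely convergent double series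
`∑_{m,n} b_m \bar b_n e^{it (log (n+2) - log (m+2))}`, which may be integrated termwise: the
diagonal contributes `(T - 2) ∑ |bₙ|²`, and the term `(m, n)` with `m ≠ n` at most
`2 |b_m| |b_n| / |log (m+2) - log (n+2)|`. These bounds are summable: for `x < y`,
`log y - log x ≥ (y - x) / y` and `y² ≥ x (y - x)` bound `x^{-σ} y^{-σ} / (log y - log x)` by a
product of convergent `p`-series in `x` and `y - x`.
-/

open Finset Complex ComplexConjugate

lemma summable_nat_add_rpow_neg {p : ℝ} (hp : 1 < p) {a : ℝ} (ha : 0 ≤ a) :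
    Summable fun n : ℕ => ((n : ℝ) + a) ^ (-p) :=
  ((Real.summable_one_div_nat_add_rpow a p).2 hp).congr fun n => by
    rw [abs_of_nonneg (by positivity), Real.rpow_neg (by positivity), one_div]

lemma inv_log_sub_log_le {x y : ℝ} (hx : 0 < x) (hxy : x < y) :
    (Real.log y - Real.log x)⁻¹ ≤ y / (y - x) := by
  have hy : 0 < y := hx.trans hxy
  have hlog : (y - x) / y ≤ Real.log y - Real.log x := by
    have := Real.one_sub_inv_le_log_of_pos (div_pos hy hx)
    rwa [inv_div, Real.log_div hy.ne' hx.ne', one_sub_div hy.ne'] at this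
  rw [← inv_div]
  exact inv_anti₀ (div_pos (sub_pos.2 hxy) hy) hlog

lemma rpow_mul_rpow_div_log_sub_le {x y ε : ℝ} (hx : 0 < x) (hxy : x < y) (hε : 0 ≤ ε) :
    x ^ (-(1 + 2 * ε)) * y ^ (-(1 + 2 * ε)) / (Real.log y - Real.log x)
      ≤ x ^ (-(1 + 3 * ε)) * (y - x) ^ (-(1 + ε)) := by
  have hy : 0 < y := hx.trans hxy
  have hd : 0 < y - x := sub_pos.2 hxy
  have hy_pow : y ^ (-(2 * ε)) ≤ x ^ (-ε) * (y - x) ^ (-ε) := by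
    rw [← Real.mul_rpow hx.le hd.le, show -(2 * ε) = 2 * -ε by ring, Real.rpow_mul hy.le]
    refine Real.rpow_le_rpow_of_nonpos (by positivity) ?_ (by linarith)
    rw [Real.rpow_two]; nlinarith
  calc x ^ (-(1 + 2 * ε)) * y ^ (-(1 + 2 * ε)) / (Real.log y - Real.log x)
      = x ^ (-(1 + 2 * ε)) * y ^ (-(2 * ε)) * y⁻¹ * (Real.log y - Real.log x)⁻¹ := by
        rw [show -(1 + 2 * ε) = -(2 * ε) + -1 by ring, Real.rpow_add hy, Real.rpow_neg_one]
        ring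
    _ ≤ x ^ (-(1 + 2 * ε)) * (x ^ (-ε) * (y - x) ^ (-ε)) * y⁻¹ * (y / (y - x)) := by
        gcongr
        · exact inv_nonneg.2 (sub_nonneg.2 (Real.log_le_log hx hxy.le))
        · exact inv_log_sub_log_le hx hxy
    _ = x ^ (-(1 + 3 * ε)) * (y - x) ^ (-(1 + ε)) := by
        rw [show -(1 + 3 * ε) = -(1 + 2 * ε) + -ε by ring, show -(1 + ε) = -ε + -1 by ring,
          Real.rpow_add hx, Real.rpow_add hd, Real.rpow_neg_one]
        field_simp

lemma Summable.tsum_eq_tsum_sum_antidiagonal {E : Type*} [AddCommMonoid E] [TopologicalSpace E]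
    [ContinuousAdd E] [T3Space E] {h : ℕ × ℕ → E} (hh : Summable h) :
    ∑' p, h p = ∑' n, ∑ p ∈ antidiagonal n, h p := by
  conv_rhs => congr; ext; rw [← sum_finset_coe, ← tsum_fintype (L := .unconditional _)]
  rw [← HasAntidiagonal.sigmaAntidiagonalEquivProd.tsum_eq h]
  exact (HasAntidiagonal.sigmaAntidiagonalEquivProd.summable_iff.2 hh).tsum_sigma'
    fun n => (hasSum_fintype _).summable

lemma hasSum_ite_diag_iff {ι E : Type*} [AddCommMonoid E] [TopologicalSpace E] [DecidableEq ι]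
    {g : ι → E} {a : E} :
    HasSum (fun q : ι × ι => if q.1 = q.2 then g q.1 else 0) a ↔ HasSum g a := by
  have hinj : Function.Injective fun n : ι => (n, n) := fun _ _ h => congrArg Prod.fst h
  rw [← hinj.hasSum_iff]
  · simp [Function.comp_def]
  · rintro ⟨m, n⟩ hq
    rw [if_neg fun h : m = n => hq ⟨m, h ▸ rfl⟩]

lemma summable_of_symm_of_le_mul {f : ℕ × ℕ → ℝ} (hf : 0 ≤ f) (hsymm : ∀ m n, f (m, n) = f (n, m))
    (hdiag : ∀ n, f (n, n) = 0) {u v : ℕ → ℝ} (hu : Summable u) (hv : Summable v)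
    (hle : ∀ m d, f (m, m + d + 1) ≤ u m * v d) : Summable f := by
  set e : ℕ × ℕ → ℕ × ℕ := fun p => (p.1, p.1 + p.2 + 1)
  have he : Function.Injective e := fun p q h => by
    simp only [e, Prod.mk.injEq] at h; ext <;> omega
  set g : ℕ × ℕ → ℝ := fun q => if q.1 < q.2 then f q else 0
  have hg : Summable g := by
    refine (he.summable_iff fun q hq => ?_).1 ?_
    · simp only [g]; rw [if_neg]; intro h
      exact hq ⟨(q.1, q.2 - q.1 - 1), Prod.ext rfl (by simp only [e]; omega)⟩
    · refine Summable.of_nonneg_of_le (fun p => ?_) (fun p => ?_)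
        (hu.abs.mul_of_nonneg hv.abs (fun _ => abs_nonneg _) (fun _ => abs_nonneg _))
      all_goals simp only [Function.comp_apply, g, e, if_pos (by omega : p.1 < p.1 + p.2 + 1)]
      · exact hf _
      · exact (hle p.1 p.2).trans ((le_abs_self _).trans (abs_mul _ _).le)
  refine Summable.of_nonneg_of_le hf (fun q => ?_) (hg.add (hg.comp_injective Prod.swap_injective))
  obtain ⟨m, n⟩ := q
  rcases lt_trichotomy m n with h | rfl | h
  · simp [g, h, not_lt.2 h.le]
  · simp [hdiag, g]
  · simp [g, h, not_lt.2 h.le, hsymm m n]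

lemma norm_intervalIntegral_exp_mul_I_le {θ : ℝ} (hθ : θ ≠ 0) (a T : ℝ) :
    ‖∫ t in a..T, cexp (↑(θ * t) * I)‖ ≤ 2 / |θ| := by
  have hc : (θ : ℂ) * I ≠ 0 := mul_ne_zero (ofReal_ne_zero.2 hθ) I_ne_zero
  have hexp (t : ℝ) : cexp (↑(θ * t) * I) = cexp (θ * I * t) := by push_cast; ring_nf
  have hnorm (t : ℝ) : ‖cexp (θ * I * t)‖ = 1 := by rw [← hexp, norm_exp_ofReal_mul_I]
  simp_rw [hexp]
  rw [integral_exp_mul_complex hc, norm_div, norm_mul, norm_I, mul_one, norm_real,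
    Real.norm_eq_abs]
  gcongr
  calc _ ≤ ‖cexp (θ * I * T)‖ + ‖cexp (θ * I * a)‖ := norm_sub_le _ _
    _ = 2 := by rw [hnorm, hnorm]; norm_num

lemma hasSum_sq_norm_tsum_mul_exp {ι : Type*} {b : ι → ℂ} (hb : Summable (‖b ·‖)) (ω : ι → ℝ)
    (t : ℝ) :
    HasSum (fun q : ι × ι => b q.1 * conj (b q.2) * cexp (↑((ω q.1 - ω q.2) * t) * I))
      (‖∑' n, b n * cexp (↑(ω n * t) * I)‖ ^ 2 : ℂ) := by
  set g : ι → ℂ := fun n => b n * cexp (↑(ω n * t) * I)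
  have hg : Summable (‖g ·‖) :=
    hb.congr fun n => by rw [norm_mul, norm_exp_ofReal_mul_I, mul_one]
  have hg' : Summable fun n => ‖conj (g n)‖ := by simpa using hg
  have hterm (q : ι × ι) : g q.1 * conj (g q.2) =
      b q.1 * conj (b q.2) * cexp (↑((ω q.1 - ω q.2) * t) * I) := by
    simp only [g, map_mul, ← exp_conj, conj_ofReal, conj_I]
    rw [mul_mul_mul_comm, ← exp_add]
    push_cast
    ring_nf
  rw [← mul_conj', conj_tsum, tsum_mul_tsum_of_summable_norm hg hg']
  simp_rw [← hterm]
  exact (summable_mul_of_summable_norm hg hg').hasSum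

/-- On the diagonal the summand of `hS` is `‖b n‖ ^ 2 / 0 = 0`. -/
theorem abs_intervalIntegral_sq_norm_tsum_mul_exp_sub_le {ι : Type*} [Countable ι] {b : ι → ℂ}
    {ω : ι → ℝ} (hb : Summable (‖b ·‖)) (hω : Function.Injective ω)
    (hS : Summable fun q : ι × ι => ‖b q.1‖ * ‖b q.2‖ / |ω q.1 - ω q.2|) (a T : ℝ) :
    |(∫ t in a..T, ‖∑' n, b n * cexp (↑(ω n * t) * I)‖ ^ 2) - (∑' n, ‖b n‖ ^ 2) * (T - a)|
      ≤ 2 * ∑' q : ι × ι, ‖b q.1‖ * ‖b q.2‖ / |ω q.1 - ω q.2| := by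
  classical
  set f : ι × ι → ℝ → ℂ := fun q t => b q.1 * conj (b q.2) * cexp (↑((ω q.1 - ω q.2) * t) * I)
  set D : ι × ι → ℂ := fun q => if q.1 = q.2 then ((‖b q.1‖ ^ 2 * (T - a) : ℝ) : ℂ) else 0
  have hnorm_f (q : ι × ι) (t : ℝ) : ‖f q t‖ = ‖b q.1‖ * ‖b q.2‖ := by
    simp only [f, norm_mul, norm_exp_ofReal_mul_I, Complex.norm_conj, mul_one]
  have hprod : Summable fun q : ι × ι => ‖b q.1‖ * ‖b q.2‖ :=
    hb.mul_of_nonneg hb (fun _ => norm_nonneg _) fun _ => norm_nonneg _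
  have hintegral : HasSum (fun q => ∫ t in a..T, f q t)
      (∫ t in a..T, (‖∑' n, b n * cexp (↑(ω n * t) * I)‖ ^ 2 : ℂ)) :=
    intervalIntegral.hasSum_integral_of_dominated_convergence (fun q _ => ‖b q.1‖ * ‖b q.2‖)
      (fun q => (by fun_prop : Continuous (f q)).aestronglyMeasurable)
      (fun q => .of_forall fun t _ => (hnorm_f q t).le) (.of_forall fun _ _ => hprod)
      intervalIntegrable_const (.of_forall fun t _ => hasSum_sq_norm_tsum_mul_exp hb ω t)
  have hsq : Summable fun n => ‖b n‖ ^ 2 :=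
    .of_nonneg_of_le (fun _ => by positivity) (fun n => by
      rw [sq]; exact mul_le_mul_of_nonneg_right (hb.le_tsum n fun _ _ => norm_nonneg _)
        (norm_nonneg _)) (hb.mul_left _)
  have hdiag : HasSum D (((∑' n, ‖b n‖ ^ 2) * (T - a) : ℝ) : ℂ) :=
    (hasSum_ite_diag_iff (g := fun n => ((‖b n‖ ^ 2 * (T - a) : ℝ) : ℂ))).2
      (hasSum_ofReal.2 (hsq.hasSum.mul_right (T - a)))
  have hterm_bound (q : ι × ι) : ‖(∫ t in a..T, f q t) - D q‖
      ≤ 2 * (‖b q.1‖ * ‖b q.2‖ / |ω q.1 - ω q.2|) := by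
    obtain ⟨m, n⟩ := q
    by_cases hmn : m = n
    · subst hmn
      have hconst (t : ℝ) : f (m, m) t = ((‖b m‖ ^ 2 : ℝ) : ℂ) := by
        simp [f, mul_conj']
      simp [hconst, D, mul_comm]
    · have hθ : ω m - ω n ≠ 0 := sub_ne_zero.2 (hω.ne hmn)
      simp only [f, D, hmn, if_false, sub_zero, intervalIntegral.integral_const_mul, norm_mul,
        Complex.norm_conj]
      calc ‖b m‖ * ‖b n‖ * ‖∫ t in a..T, cexp (↑((ω m - ω n) * t) * I)‖
          ≤ ‖b m‖ * ‖b n‖ * (2 / |ω m - ω n|) := by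
            gcongr; exact norm_intervalIntegral_exp_mul_I_le hθ a T
        _ = 2 * (‖b m‖ * ‖b n‖ / |ω m - ω n|) := by ring
  have key := (hintegral.sub hdiag).norm_le_of_bounded (hS.hasSum.mul_left 2) hterm_bound
  simp_rw [← ofReal_pow] at key
  rwa [intervalIntegral.integral_ofReal, ← ofReal_sub, norm_real,
    Real.norm_eq_abs] at key

noncomputable def zetaPartialSum (s : ℂ) (k : ℕ) : ℂ := ∑ m ∈ Icc 1 k, (m : ℂ) ^ (-s)

lemma zetaPartialSum_eq_sum_range (s : ℂ) (k : ℕ) :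
    zetaPartialSum s k = ∑ m ∈ range k, ((m + 1 : ℕ) : ℂ) ^ (-s) := by
  rw [zetaPartialSum, ← Ico_add_one_right_eq_Icc, sum_Ico_eq_sum_range]
  simp [add_comm]

lemma norm_zetaPartialSum_le {s : ℂ} (hs : 1 < s.re) (k : ℕ) :
    ‖zetaPartialSum s k‖ ≤ ∑' m : ℕ, (m : ℝ) ^ (-s.re) := by
  calc ‖zetaPartialSum s k‖ ≤ ∑ m ∈ Icc 1 k, ‖(m : ℂ) ^ (-s)‖ := norm_sum_le _ _
    _ = ∑ m ∈ Icc 1 k, (m : ℝ) ^ (-s.re) := sum_congr rfl fun m hm => by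
        rw [norm_natCast_cpow_of_pos (mem_Icc.1 hm).1, neg_re]
    _ ≤ _ := Summable.sum_le_tsum _ (fun _ _ => by positivity)
        (Real.summable_nat_rpow.2 (by linarith))

lemma natCast_cpow_neg_ofReal_add_mul_I {n : ℕ} (hn : n ≠ 0) (σ t : ℝ) :
    (n : ℂ) ^ (-((σ : ℂ) + t * I)) = (n : ℂ) ^ (-(σ : ℂ)) * cexp (↑(-Real.log n * t) * I) := by
  have hn' : (n : ℂ) ≠ 0 := Nat.cast_ne_zero.2 hn
  rw [neg_add, cpow_add _ _ hn', cpow_def_of_ne_zero hn' (-(t * I)), ← ofReal_natCast,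
    ← ofReal_log n.cast_nonneg]
  push_cast
  ring_nf

noncomputable def eulerDoubleZeta (s₀ s : ℂ) : ℂ :=
  ∑' p : ℕ × ℕ, ((p.1 + 1 : ℕ) : ℂ) ^ (-s₀) * ((p.1 + p.2 + 2 : ℕ) : ℂ) ^ (-s)

lemma eulerDoubleZeta_eq_tsum_zetaPartialSum {s₀ s : ℂ} (hs₀ : 1 < s₀.re) (hs : 1 < s.re) :
    eulerDoubleZeta s₀ s = ∑' n, zetaPartialSum s₀ (n + 1) * ((n + 2 : ℕ) : ℂ) ^ (-s) := by
  have hsum : Summable fun p : ℕ × ℕ =>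
      ((p.1 + 1 : ℕ) : ℂ) ^ (-s₀) * ((p.1 + p.2 + 2 : ℕ) : ℂ) ^ (-s) := by
    refine .of_norm_bounded ((summable_nat_add_rpow_neg hs₀ zero_le_one).mul_of_nonneg
      (summable_nat_add_rpow_neg hs zero_le_one) (fun _ => by positivity) (fun _ => by positivity))
      fun p => ?_
    rw [norm_mul, norm_natCast_cpow_of_pos (by omega), norm_natCast_cpow_of_pos (by omega)]
    push_cast [neg_re]
    exact mul_le_mul_of_nonneg_left (Real.rpow_le_rpow_of_nonpos (by positivity)
      (by linarith [(p.1.cast_nonneg : (0 : ℝ) ≤ p.1)]) (by linarith)) (by positivity)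
  rw [eulerDoubleZeta, hsum.tsum_eq_tsum_sum_antidiagonal]
  refine tsum_congr fun n => ?_
  rw [sum_congr rfl fun p hp => by rw [mem_antidiagonal.1 hp], ← sum_mul,
    Finset.Nat.sum_antidiagonal_eq_sum_range_succ (fun i _ => ((i + 1 : ℕ) : ℂ) ^ (-s₀)),
    zetaPartialSum_eq_sum_range]

noncomputable def doubleZetaCoeff (s₀ : ℂ) (σ : ℝ) (n : ℕ) : ℂ :=
  zetaPartialSum s₀ (n + 1) * ((n + 2 : ℕ) : ℂ) ^ (-(σ : ℂ))

lemma eulerDoubleZeta_ofReal_add_mul_I {s₀ : ℂ} (hs₀ : 1 < s₀.re) {σ : ℝ} (hσ : 1 < σ) (t : ℝ) :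
    eulerDoubleZeta s₀ (σ + t * I)
      = ∑' n, doubleZetaCoeff s₀ σ n * cexp (↑(-Real.log ((n : ℝ) + 2) * t) * I) := by
  rw [eulerDoubleZeta_eq_tsum_zetaPartialSum hs₀ (by simpa using hσ)]
  refine tsum_congr fun n => ?_
  rw [natCast_cpow_neg_ofReal_add_mul_I (by omega), doubleZetaCoeff]
  push_cast
  ring

lemma norm_doubleZetaCoeff_le {s₀ : ℂ} (hs₀ : 1 < s₀.re) (σ : ℝ) (n : ℕ) :
    ‖doubleZetaCoeff s₀ σ n‖ ≤ (∑' m : ℕ, (m : ℝ) ^ (-s₀.re)) * ((n : ℝ) + 2) ^ (-σ) := by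
  rw [doubleZetaCoeff, norm_mul, norm_natCast_cpow_of_pos (by omega)]
  push_cast [neg_re, ofReal_re]
  exact mul_le_mul_of_nonneg_right (norm_zetaPartialSum_le hs₀ _) (by positivity)

lemma summable_norm_doubleZetaCoeff {s₀ : ℂ} (hs₀ : 1 < s₀.re) {σ : ℝ} (hσ : 1 < σ) :
    Summable (‖doubleZetaCoeff s₀ σ ·‖) :=
  .of_nonneg_of_le (fun _ => norm_nonneg _) (norm_doubleZetaCoeff_le hs₀ σ)
    ((summable_nat_add_rpow_neg hσ zero_le_two).mul_left _)

lemma summable_doubleZetaCoeff_div_log_sub_log {s₀ : ℂ} (hs₀ : 1 < s₀.re) {σ : ℝ} (hσ : 1 < σ) :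
    Summable fun q : ℕ × ℕ => ‖doubleZetaCoeff s₀ σ q.1‖ * ‖doubleZetaCoeff s₀ σ q.2‖
      / |Real.log ((q.2 : ℝ) + 2) - Real.log ((q.1 : ℝ) + 2)| := by
  obtain ⟨ε, hε, rfl⟩ : ∃ ε > 0, σ = 1 + 2 * ε := ⟨(σ - 1) / 2, by linarith, by ring⟩
  set Z := ∑' m : ℕ, (m : ℝ) ^ (-s₀.re)
  have hZ : 0 ≤ Z := tsum_nonneg fun _ => by positivity
  refine summable_of_symm_of_le_mul (fun q => by positivity)
    (fun m n => by rw [mul_comm, abs_sub_comm]) (fun n => by simp)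
    ((summable_nat_add_rpow_neg (by linarith : 1 < 1 + 3 * ε) zero_le_two).mul_left (Z ^ 2))
    (summable_nat_add_rpow_neg (by linarith : 1 < 1 + ε) zero_le_one) fun m d => ?_
  set x : ℝ := m + 2
  set y : ℝ := ((m + d + 1 : ℕ) : ℝ) + 2
  have hx : 0 < x := by positivity
  have hxy : x < y := by simp only [x, y]; push_cast; linarith [(d.cast_nonneg : (0 : ℝ) ≤ d)]
  have hlog : 0 < Real.log y - Real.log x := sub_pos.2 (Real.log_lt_log hx hxy)
  calc ‖doubleZetaCoeff s₀ (1 + 2 * ε) m‖ * ‖doubleZetaCoeff s₀ (1 + 2 * ε) (m + d + 1)‖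
        / |Real.log y - Real.log x|
      ≤ Z * x ^ (-(1 + 2 * ε)) * (Z * y ^ (-(1 + 2 * ε))) / (Real.log y - Real.log x) := by
        rw [abs_of_pos hlog]
        gcongr
        · exact norm_doubleZetaCoeff_le hs₀ _ m
        · exact norm_doubleZetaCoeff_le hs₀ _ (m + d + 1)
    _ = Z ^ 2 * (x ^ (-(1 + 2 * ε)) * y ^ (-(1 + 2 * ε)) / (Real.log y - Real.log x)) := by ring
    _ ≤ Z ^ 2 * (x ^ (-(1 + 3 * ε)) * (y - x) ^ (-(1 + ε))) := by
        gcongr; exact rpow_mul_rpow_div_log_sub_le hx hxy hε.le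
    _ = Z ^ 2 * ((m : ℝ) + 2) ^ (-(1 + 3 * ε)) * (((d : ℝ) + 1) ^ (-(1 + ε))) := by
        simp only [x, y]; push_cast; ring_nf

lemma tsum_sq_norm_zetaPartialSum_mul_rpow (s₀ : ℂ) (σ : ℝ) :
    ∑' k : ℕ, ‖∑ m ∈ Icc 1 (k - 1), (m : ℂ) ^ (-s₀)‖ ^ 2 * (k : ℝ) ^ (-(2 * σ))
      = ∑' n, ‖doubleZetaCoeff s₀ σ n‖ ^ 2 := by
  rw [← (add_left_injective 2).tsum_eq]
  · refine tsum_congr fun n => ?_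
    rw [doubleZetaCoeff, norm_mul, norm_natCast_cpow_of_pos (by omega), mul_pow,
      ← Real.rpow_mul_natCast (by positivity)]
    simp [zetaPartialSum, mul_comm]
  · intro k hk
    refine ⟨k - 2, by_contra fun hne => hk ?_⟩
    simp only at hne
    simp [show k - 1 = 0 by omega]

theorem stmt9 (s₀ : ℂ) (σ : ℝ) (h0 : 1 < s₀.re) (hσ : 1 < σ) :
    ∃ C : ℝ, ∀ T : ℝ, 2 ≤ T →
      |(∫ t in (2:ℝ)..T,
          ‖∑' p : ℕ × ℕ, ((p.1 + 1 : ℕ) : ℂ) ^ (-s₀) *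
            ((p.1 + p.2 + 2 : ℕ) : ℂ) ^ (-((σ : ℂ) + t * Complex.I))‖ ^ 2)
        - (∑' k : ℕ, ‖∑ m ∈ Finset.Icc 1 (k - 1), ((m : ℕ) : ℂ) ^ (-s₀)‖ ^ 2 *
            (k : ℝ) ^ (-(2 * σ))) * T| ≤ C := by
  simp only [← eulerDoubleZeta.eq_1, eulerDoubleZeta_ofReal_add_mul_I h0 hσ,
    tsum_sq_norm_zetaPartialSum_mul_rpow]
  set c := ∑' n, ‖doubleZetaCoeff s₀ σ n‖ ^ 2
  have hω : StrictAnti fun n : ℕ => -Real.log ((n : ℝ) + 2) := fun m n hmn =>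
    neg_lt_neg (Real.log_lt_log (by positivity) (by simpa using hmn))
  have hmean := abs_intervalIntegral_sq_norm_tsum_mul_exp_sub_le
    (summable_norm_doubleZetaCoeff h0 hσ) hω.injective
    (by simpa only [neg_sub_neg] using summable_doubleZetaCoeff_div_log_sub_log h0 hσ) 2
  have hshift (T : ℝ) : |c * (T - 2) - c * T| = 2 * c := by
    rw [show c * (T - 2) - c * T = -(2 * c) by ring, abs_neg,
      abs_of_nonneg (mul_nonneg zero_le_two (tsum_nonneg fun _ => by positivity))]
  exact ⟨_, fun T _ => (abs_sub_le _ (c * (T - 2)) _).trans (add_le_add (hmean T) (hshift T).le)⟩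
end

section
/- Let s₀ = σ₀ + it₀ with σ₀ > 1. Then the limit γ₂(s₀) = lim_{N→∞} ∑_{m≥1} m^{-s₀} ( ∑_{n=1}^N 1/(m+n) - log(m+N) ) exists. -/
/-!
The inner sum is `H (m + 1 + N) - H (m + 1)`, so the `m`-th term is `(m + 1) ^ (-s₀)` times
`H (m + 1 + N) - log (m + 1 + N) - H (m + 1)`, which tends to `γ - H (m + 1)` as `N → ∞`.
Since `0 ≤ H n - log n ≤ 1` for all `n`, these terms are bounded by `1 + log (m + 1)` uniformly
in `N`, and `∑ (m + 1) ^ (-σ₀) (1 + log (m + 1))` converges for `σ₀ > 1`; Tannery's theorem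
(dominated convergence for series) then gives the limit.
-/

open Filter Real Topology Asymptotics

lemma summable_rpow_neg_mul_log {σ : ℝ} (hσ : 1 < σ) :
    Summable fun n : ℕ => (n : ℝ) ^ (-σ) * log n := by
  obtain ⟨r, hr₀, hr⟩ : ∃ r : ℝ, 0 < r ∧ -σ + r < -1 := ⟨(σ - 1) / 2, by linarith, by linarith⟩
  have hlog : (fun x : ℝ => x ^ (-σ) * log x) =O[atTop] fun x => x ^ (-σ) * x ^ r :=
    (isBigO_refl _ _).mul (isLittleO_log_rpow_atTop hr₀).isBigO
  have hpow : (fun x : ℝ => x ^ (-σ) * x ^ r) =ᶠ[atTop] fun x => x ^ (-σ + r) :=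
    (eventually_gt_atTop 0).mono fun x hx => (rpow_add hx _ _).symm
  refine summable_of_isBigO_nat (summable_nat_rpow.2 hr) ?_
  exact (hlog.trans_eventuallyEq hpow).comp_tendsto tendsto_natCast_atTop_atTop

lemma sum_Icc_one_div_natCast_add_eq_harmonic_sub {K : Type*} [DivisionRing K] [CharZero K]
    (k N : ℕ) :
    ∑ n ∈ Finset.Icc 1 N, (1 : K) / ((k + n : ℕ) : K) = harmonic (k + N) - harmonic k := by
  induction N with
  | zero => simp
  | succ N ih =>
    rw [Finset.sum_Icc_succ_top (by omega), ih, ← add_assoc, harmonic_succ]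
    push_cast
    rw [one_div]
    abel

lemma harmonic_sub_log_mem_Icc (n : ℕ) : (harmonic n : ℝ) - log n ∈ Set.Icc 0 1 := by
  have hlog : log n ≤ log (n + 1 : ℕ) := by
    rcases n.eq_zero_or_pos with rfl | hn
    · simp
    · exact log_le_log (by positivity) (by push_cast; linarith)
  constructor
  · linarith [log_add_one_le_harmonic n]
  · linarith [harmonic_le_one_add_log n]

lemma abs_harmonic_add_sub_log_sub_harmonic_le (k N : ℕ) :
    |(harmonic (k + N) : ℝ) - log (k + N : ℕ) - harmonic k| ≤ 1 + log k := by
  obtain ⟨h₀, h₁⟩ := harmonic_sub_log_mem_Icc (k + N)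
  have hk₀ := (harmonic_sub_log_mem_Icc k).1
  have hk₁ := harmonic_le_one_add_log k
  have hlog : 0 ≤ log k := log_natCast_nonneg k
  rw [abs_le]
  constructor <;> linarith

lemma tendsto_harmonic_add_sub_log (k : ℕ) :
    Tendsto (fun N : ℕ => (harmonic (k + N) : ℝ) - log (k + N : ℕ)) atTop
      (𝓝 eulerMascheroniConstant) :=
  tendsto_harmonic_sub_log.comp <| (tendsto_add_atTop_nat k).congr fun N => add_comm N k

lemma tendsto_tsum_cpow_mul_of_abs_le_one_add_log {s : ℂ} (hs : 1 < s.re) {u : ℕ → ℕ → ℝ}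
    {v : ℕ → ℝ} (hu : ∀ m, Tendsto (fun N => u N m) atTop (𝓝 (v m)))
    (hbound : ∀ N m, |u N m| ≤ 1 + log (m + 1 : ℕ)) :
    Tendsto (fun N => ∑' m : ℕ, ((m + 1 : ℕ) : ℂ) ^ (-s) * u N m) atTop
      (𝓝 (∑' m : ℕ, ((m + 1 : ℕ) : ℂ) ^ (-s) * v m)) := by
  have hsum : Summable fun m : ℕ => ((m + 1 : ℕ) : ℝ) ^ (-s.re) * (1 + log (m + 1 : ℕ)) := by
    refine (summable_nat_add_iff 1 (f := fun n : ℕ => (n : ℝ) ^ (-s.re) * (1 + log n))).2 ?_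
    simp_rw [mul_one_add]
    exact (summable_nat_rpow.2 (by linarith)).add (summable_rpow_neg_mul_log hs)
  refine tendsto_tsum_of_dominated_convergence hsum
    (fun m => ((Complex.continuous_ofReal.tendsto _).comp (hu m)).const_mul _)
    (.of_forall fun N m => ?_)
  rw [norm_mul, Complex.norm_natCast_cpow_of_pos m.succ_pos, Complex.neg_re, Complex.norm_real,
    norm_eq_abs]
  exact mul_le_mul_of_nonneg_left (hbound N m) (by positivity)

theorem stmt13 (s₀ : ℂ) (h : 1 < s₀.re) :
    ∃ L : ℂ, Filter.Tendsto (fun N : ℕ =>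
      ∑' m : ℕ, ((m + 1 : ℕ) : ℂ) ^ (-s₀) *
        ((∑ n ∈ Finset.Icc 1 N, (1 : ℂ) / ((m + 1 + n : ℕ) : ℂ))
          - Complex.log ((m + 1 + N : ℕ) : ℂ)))
      Filter.atTop (nhds L) := by
  have hterm : ∀ m N : ℕ, (∑ n ∈ Finset.Icc 1 N, (1 : ℂ) / ((m + 1 + n : ℕ) : ℂ))
      - Complex.log ((m + 1 + N : ℕ) : ℂ)
      = (((harmonic (m + 1 + N) : ℝ) - log (m + 1 + N : ℕ) - harmonic (m + 1) : ℝ) : ℂ) := by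
    intro m N
    rw [sum_Icc_one_div_natCast_add_eq_harmonic_sub, ← Complex.natCast_log]
    push_cast
    ring
  simp_rw [hterm]
  exact ⟨_, tendsto_tsum_cpow_mul_of_abs_le_one_add_log h
    (fun m => (tendsto_harmonic_add_sub_log (m + 1)).sub_const _)
    (fun N m => abs_harmonic_add_sub_log_sub_harmonic_le (m + 1) N)⟩
end

section
/- Let s₀ be a complex number with Re s₀ > 1. Then γ₂(s₀) = ζ(s₀)γ - ζ₂(1, s₀) - ζ(s₀+1), where γ is the Euler–Mascheroni constant, ζ is the Riemann zeta-function, and ζ₂(1,s₀) = ∑_{m≥1}∑_{n≥1} m^{-1}(m+n)^{-s₀}. -/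
/-!
Writing the inner sum as `H_{m+1+N} - H_{m+1}`, the `N`-th series has terms
`(m+1)^{-s₀} ((H_k - log k) - H_{m+1})` with `k = m+1+N`. Since `0 ≤ H_k - log k ≤ 1` and
`H_m ≤ 1 + log m` grows slower than any power of `m`, dominated convergence gives
`γ₂ = ∑ (m+1)^{-s₀} (γ - H_{m+1})`. Splitting `H_{m+1} = H_m + 1/(m+1)` yields
`ζ(s₀) γ - ζ(s₀+1) - ∑ H_m (m+1)^{-s₀}`, and expanding `H_m` and regrouping along the
antidiagonals `a + b = m - 1` turns the last series into `ζ₂(1, s₀)`.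
-/

open Finset Filter Topology Complex

section Antidiagonal

variable {A E : Type*} [AddCommMonoid A] [HasAntidiagonal A]
  [NormedAddCommGroup E] [CompleteSpace E] {f : A × A → E}

lemma summable_of_summable_sum_norm_antidiagonal
    (hf : Summable fun n ↦ ∑ p ∈ antidiagonal n, ‖f p‖) : Summable f := by
  rw [← HasAntidiagonal.sigmaAntidiagonalEquivProd.summable_iff]
  refine Summable.of_norm <| (summable_sigma_of_nonneg fun _ ↦ norm_nonneg _).2
    ⟨fun _ ↦ (hasSum_fintype _).summable, ?_⟩
  simpa only [Function.comp_apply, HasAntidiagonal.sigmaAntidiagonalEquivProd_apply,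
    Finset.tsum_subtype (antidiagonal _) fun p ↦ ‖f p‖] using hf

lemma Summable.tsum_eq_tsum_sum_antidiagonal_s14 (hf : Summable f) :
    ∑' p, f p = ∑' n, ∑ p ∈ antidiagonal n, f p := by
  rw [← HasAntidiagonal.sigmaAntidiagonalEquivProd.tsum_eq f]
  simpa only [Function.comp_apply, HasAntidiagonal.sigmaAntidiagonalEquivProd_apply,
    Finset.tsum_subtype (antidiagonal _) f]
    using (HasAntidiagonal.sigmaAntidiagonalEquivProd.summable_iff.2 hf).tsum_sigma

end Antidiagonal

lemma harmonic_nonneg (n : ℕ) : 0 ≤ harmonic n := by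
  rcases n.eq_zero_or_pos with rfl | hn
  · simp
  · exact (harmonic_pos hn.ne').le

lemma harmonic_succ_eq_sum_antidiagonal (n : ℕ) :
    harmonic (n + 1) = ∑ p ∈ antidiagonal n, ((p.1 + 1 : ℕ) : ℚ)⁻¹ := by
  rw [Nat.sum_antidiagonal_eq_sum_range_succ_mk]
  rfl

lemma sum_antidiagonal_inv_succ_mul_eq_harmonic_mul {K : Type*} [DivisionRing K] [CharZero K]
    (w : ℕ → K) (n : ℕ) :
    ∑ p ∈ antidiagonal n, ((p.1 + 1 : ℕ) : K)⁻¹ * w (p.1 + p.2) = harmonic (n + 1) * w n := by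
  rw [sum_congr rfl fun p hp ↦ by rw [mem_antidiagonal.1 hp], ← sum_mul,
    harmonic_succ_eq_sum_antidiagonal]
  push_cast
  rfl

lemma sum_Icc_inv_add_eq_harmonic_sub (k N : ℕ) :
    ∑ n ∈ Icc 1 N, (1 : ℂ) / ((k + n : ℕ) : ℂ) = harmonic (k + N) - harmonic k := by
  induction N with
  | zero => simp
  | succ N ih =>
    rw [sum_Icc_succ_top (by omega), ih, ← add_assoc, harmonic_succ]
    push_cast
    ring

lemma abs_harmonic_sub_log_le_one (n : ℕ) : |(harmonic n : ℝ) - Real.log n| ≤ 1 := by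
  rcases n.eq_zero_or_pos with rfl | hn
  · simp
  have hlog : Real.log n ≤ Real.log (n + 1 : ℕ) := Real.log_le_log (by positivity) (by simp)
  rw [abs_le]
  constructor <;> linarith [log_add_one_le_harmonic n, harmonic_le_one_add_log n]

lemma harmonic_le_mul_natCast_succ_rpow {ε : ℝ} (hε : 0 < ε) (n : ℕ) :
    (harmonic n : ℝ) ≤ (1 + ε⁻¹) * ((n + 1 : ℕ) : ℝ) ^ ε := by
  have hn : (n : ℝ) ≤ (n + 1 : ℕ) := by simp
  have h1 : 1 ≤ ((n + 1 : ℕ) : ℝ) ^ ε := Real.one_le_rpow (by simp) hε.le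
  have hlog : Real.log n ≤ ((n + 1 : ℕ) : ℝ) ^ ε / ε :=
    (Real.log_le_rpow_div n.cast_nonneg hε).trans (by gcongr)
  calc (harmonic n : ℝ) ≤ 1 + Real.log n := harmonic_le_one_add_log n
    _ ≤ ((n + 1 : ℕ) : ℝ) ^ ε + ((n + 1 : ℕ) : ℝ) ^ ε / ε := by gcongr
    _ = (1 + ε⁻¹) * ((n + 1 : ℕ) : ℝ) ^ ε := by ring

lemma summable_natCast_succ_rpow {p : ℝ} (hp : p < -1) :
    Summable fun n : ℕ ↦ ((n + 1 : ℕ) : ℝ) ^ p :=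
  (summable_nat_add_iff 1).2 (Real.summable_nat_rpow.2 hp)

lemma summable_harmonic_mul_natCast_succ_rpow_neg {σ : ℝ} (hσ : 1 < σ) :
    Summable fun n : ℕ ↦ (harmonic n : ℝ) * ((n + 1 : ℕ) : ℝ) ^ (-σ) := by
  set ε := (σ - 1) / 2
  have hε : 0 < ε := by simp only [ε]; linarith
  refine .of_nonneg_of_le (fun n ↦ mul_nonneg (mod_cast harmonic_nonneg n) (by positivity))
    (fun n ↦ ?_)
    ((summable_natCast_succ_rpow (p := ε - σ) (by simp only [ε]; linarith)).mul_left (1 + ε⁻¹))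
  calc (harmonic n : ℝ) * ((n + 1 : ℕ) : ℝ) ^ (-σ)
      ≤ (1 + ε⁻¹) * ((n + 1 : ℕ) : ℝ) ^ ε * ((n + 1 : ℕ) : ℝ) ^ (-σ) := by
        gcongr
        exact harmonic_le_mul_natCast_succ_rpow hε n
    _ = (1 + ε⁻¹) * ((n + 1 : ℕ) : ℝ) ^ (ε - σ) := by
        rw [mul_assoc, ← Real.rpow_add (by positivity), sub_eq_add_neg]

section HarmonicWeights

variable {𝕜 : Type*} [RCLike 𝕜] {w : ℕ → 𝕜}

lemma summable_inv_succ_mul_of_summable_harmonic_mul_norm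
    (hw : Summable fun n ↦ (harmonic (n + 1) : ℝ) * ‖w n‖) :
    Summable fun p : ℕ × ℕ ↦ ((p.1 + 1 : ℕ) : 𝕜)⁻¹ * w (p.1 + p.2) := by
  refine summable_of_summable_sum_norm_antidiagonal ?_
  simpa only [norm_mul, norm_inv, RCLike.norm_natCast,
    sum_antidiagonal_inv_succ_mul_eq_harmonic_mul fun n ↦ ‖w n‖] using hw

lemma tsum_inv_succ_mul_eq_tsum_harmonic_mul
    (hw : Summable fun n ↦ (harmonic (n + 1) : ℝ) * ‖w n‖) :
    ∑' p : ℕ × ℕ, ((p.1 + 1 : ℕ) : 𝕜)⁻¹ * w (p.1 + p.2) =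
      ∑' n, (harmonic (n + 1) : 𝕜) * w n := by
  simp only [(summable_inv_succ_mul_of_summable_harmonic_mul_norm hw).tsum_eq_tsum_sum_antidiagonal_s14,
    sum_antidiagonal_inv_succ_mul_eq_harmonic_mul w]

end HarmonicWeights

lemma norm_natCast_succ_cpow_neg (s : ℂ) (n : ℕ) :
    ‖((n + 1 : ℕ) : ℂ) ^ (-s)‖ = ((n + 1 : ℕ) : ℝ) ^ (-s.re) := by
  rw [norm_natCast_cpow_of_pos n.succ_pos, neg_re]

lemma norm_harmonic (n : ℕ) : ‖(harmonic n : ℂ)‖ = harmonic n := by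
  rw [Complex.norm_ratCast, abs_of_nonneg (mod_cast harmonic_nonneg n)]

lemma sum_Icc_inv_add_sub_log_eq (k N : ℕ) :
    ∑ n ∈ Icc 1 N, (1 : ℂ) / ((k + n : ℕ) : ℂ) - log ((k + N : ℕ) : ℂ)
      = (((harmonic (k + N) : ℝ) - Real.log (k + N : ℕ) : ℝ) : ℂ) - harmonic k := by
  rw [sum_Icc_inv_add_eq_harmonic_sub, ← natCast_log]
  push_cast
  ring

lemma tendsto_sum_Icc_inv_add_sub_log (k : ℕ) :
    Tendsto (fun N : ℕ ↦ ∑ n ∈ Icc 1 N, (1 : ℂ) / ((k + n : ℕ) : ℂ) - log ((k + N : ℕ) : ℂ))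
      atTop (𝓝 ((Real.eulerMascheroniConstant : ℂ) - harmonic k)) := by
  simp only [sum_Icc_inv_add_sub_log_eq]
  have hk : Tendsto (fun N ↦ k + N) atTop atTop :=
    (tendsto_add_atTop_nat k).congr fun N ↦ add_comm N k
  exact ((continuous_ofReal.tendsto _).comp (Real.tendsto_harmonic_sub_log.comp hk)).sub_const _

lemma norm_sum_Icc_inv_add_sub_log_le (k N : ℕ) :
    ‖∑ n ∈ Icc 1 N, (1 : ℂ) / ((k + n : ℕ) : ℂ) - log ((k + N : ℕ) : ℂ)‖ ≤ 1 + harmonic k := by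
  rw [sum_Icc_inv_add_sub_log_eq]
  refine (norm_sub_le _ _).trans ?_
  rw [norm_real, Real.norm_eq_abs, norm_harmonic]
  gcongr
  exact abs_harmonic_sub_log_le_one _

section Dirichlet

variable {s : ℂ}

lemma summable_natCast_succ_cpow_neg (hs : 1 < s.re) :
    Summable fun n : ℕ ↦ ((n + 1 : ℕ) : ℂ) ^ (-s) :=
  .of_norm <| by
    simpa only [norm_natCast_succ_cpow_neg] using summable_natCast_succ_rpow (by linarith)

lemma summable_harmonic_mul_natCast_succ_cpow_neg (hs : 1 < s.re) :
    Summable fun n : ℕ ↦ (harmonic n : ℂ) * ((n + 1 : ℕ) : ℂ) ^ (-s) :=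
  .of_norm <| by
    simpa only [norm_mul, norm_natCast_succ_cpow_neg, norm_harmonic]
      using summable_harmonic_mul_natCast_succ_rpow_neg hs

lemma riemannZeta_eq_tsum_natCast_succ_cpow_neg (hs : 1 < s.re) :
    riemannZeta s = ∑' n : ℕ, ((n + 1 : ℕ) : ℂ) ^ (-s) := by
  rw [zeta_eq_tsum_one_div_nat_add_one_cpow hs]
  push_cast
  simp only [cpow_neg, one_div]

lemma tsum_harmonic_mul_natCast_succ_cpow_neg_eq_tsum_prod (hs : 1 < s.re) :
    ∑' n : ℕ, (harmonic n : ℂ) * ((n + 1 : ℕ) : ℂ) ^ (-s) =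
      ∑' p : ℕ × ℕ, ((p.1 + 1 : ℕ) : ℂ) ^ (-(1 : ℂ)) * ((p.1 + p.2 + 2 : ℕ) : ℂ) ^ (-s) := by
  have hw : Summable fun n ↦ (harmonic (n + 1) : ℝ) * ‖((n + 2 : ℕ) : ℂ) ^ (-s)‖ := by
    simpa only [norm_natCast_succ_cpow_neg]
      using (summable_nat_add_iff 1).2 (summable_harmonic_mul_natCast_succ_rpow_neg hs)
  simp only [cpow_neg_one]
  rw [tsum_inv_succ_mul_eq_tsum_harmonic_mul (w := fun n ↦ ((n + 2 : ℕ) : ℂ) ^ (-s)) hw,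
    (summable_harmonic_mul_natCast_succ_cpow_neg hs).tsum_eq_zero_add]
  simp only [harmonic_zero, Rat.cast_zero, zero_mul, zero_add]

lemma tsum_natCast_succ_cpow_neg_mul_eulerMascheroni_sub_harmonic (hs : 1 < s.re) :
    ∑' m : ℕ, ((m + 1 : ℕ) : ℂ) ^ (-s) * ((Real.eulerMascheroniConstant : ℂ) - harmonic (m + 1))
      = riemannZeta s * Real.eulerMascheroniConstant
        - ∑' n : ℕ, (harmonic n : ℂ) * ((n + 1 : ℕ) : ℂ) ^ (-s) - riemannZeta (s + 1) := by
  have hs' : 1 < (s + 1).re := by simp only [add_re, one_re]; linarith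
  have hterm : ∀ m : ℕ,
      ((m + 1 : ℕ) : ℂ) ^ (-s) * ((Real.eulerMascheroniConstant : ℂ) - harmonic (m + 1))
        = ((m + 1 : ℕ) : ℂ) ^ (-s) * Real.eulerMascheroniConstant
          - (harmonic m : ℂ) * ((m + 1 : ℕ) : ℂ) ^ (-s) - ((m + 1 : ℕ) : ℂ) ^ (-(s + 1)) := by
    intro m
    rw [harmonic_succ, neg_add, cpow_add _ _ (Nat.cast_ne_zero.2 m.succ_ne_zero), cpow_neg_one]
    push_cast
    ring
  have hzeta := (summable_natCast_succ_cpow_neg hs).mul_right (Real.eulerMascheroniConstant : ℂ)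
  have hharm := summable_harmonic_mul_natCast_succ_cpow_neg hs
  rw [tsum_congr hterm, (hzeta.sub hharm).tsum_sub (summable_natCast_succ_cpow_neg hs'),
    hzeta.tsum_sub hharm, tsum_mul_right, ← riemannZeta_eq_tsum_natCast_succ_cpow_neg hs,
    ← riemannZeta_eq_tsum_natCast_succ_cpow_neg hs']

lemma tendsto_tsum_natCast_succ_cpow_neg_mul_sum_Icc_inv_sub_log (hs : 1 < s.re) :
    Tendsto (fun N : ℕ ↦ ∑' m : ℕ, ((m + 1 : ℕ) : ℂ) ^ (-s) *
        (∑ n ∈ Icc 1 N, (1 : ℂ) / ((m + 1 + n : ℕ) : ℂ) - log ((m + 1 + N : ℕ) : ℂ)))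
      atTop (𝓝 (∑' m : ℕ, ((m + 1 : ℕ) : ℂ) ^ (-s) *
        ((Real.eulerMascheroniConstant : ℂ) - harmonic (m + 1)))) := by
  refine tendsto_tsum_of_dominated_convergence
    (bound := fun m ↦ ((m + 1 : ℕ) : ℝ) ^ (-s.re) * (2 + harmonic m)) ?_
    (fun m ↦ (tendsto_sum_Icc_inv_add_sub_log (m + 1)).const_mul _)
    (.of_forall fun N m ↦ ?_)
  · refine (((summable_natCast_succ_rpow (p := -s.re) (by linarith)).mul_left 2).add
      (summable_harmonic_mul_natCast_succ_rpow_neg hs)).congr fun m ↦ ?_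
    ring
  · have hH : (harmonic (m + 1) : ℝ) ≤ 1 + harmonic m := by
      rw [harmonic_succ]
      push_cast
      linarith [inv_le_one_of_one_le₀ (by simp : (1 : ℝ) ≤ m + 1)]
    rw [norm_mul, norm_natCast_succ_cpow_neg]
    gcongr
    linarith [norm_sum_Icc_inv_add_sub_log_le (m + 1) N]

end Dirichlet

theorem stmt14 (s₀ : ℂ) (h : 1 < s₀.re) (γ₂ : ℂ)
    (hγ₂ : Filter.Tendsto (fun N : ℕ =>
      ∑' m : ℕ, ((m + 1 : ℕ) : ℂ) ^ (-s₀) *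
        ((∑ n ∈ Finset.Icc 1 N, (1 : ℂ) / ((m + 1 + n : ℕ) : ℂ))
          - Complex.log ((m + 1 + N : ℕ) : ℂ)))
      Filter.atTop (nhds γ₂)) :
    γ₂ = riemannZeta s₀ * (Real.eulerMascheroniConstant : ℂ)
      - (∑' p : ℕ × ℕ, ((p.1 + 1 : ℕ) : ℂ) ^ (-(1 : ℂ)) * ((p.1 + p.2 + 2 : ℕ) : ℂ) ^ (-s₀))
      - riemannZeta (s₀ + 1) := by
  rw [tendsto_nhds_unique hγ₂ (tendsto_tsum_natCast_succ_cpow_neg_mul_sum_Icc_inv_sub_log h),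
    tsum_natCast_succ_cpow_neg_mul_eulerMascheroni_sub_harmonic h,
    tsum_harmonic_mul_natCast_succ_cpow_neg_eq_tsum_prod h]
end
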